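/- Let E : B → A have Index E = 2 and let X_B = e_A C*⟨B, e_A⟩ (1−e_A), with left and right A-actions a·x·b = axb and inner products _A⟨x,y⟩ = ψ^{-1}(xy*), ⟨x,y⟩_A = φ^{-1}(x*y), where ψ(a) = a e_A and φ = β̂ ∘ ψ. Then X_B is an A-A-equivalence bimodule. -/

import Mathlib

/-!
For index `2` the elements `yᵢ = xᵢ - E(xᵢ)` satisfy `∑ yᵢ yᵢ* = 1` and `1 - e = ∑ ι(yᵢ) e ι(yᵢ)*`.
Complete positivity of `E`, applied to a suitable vector built from the quasi-basis, gives
`d* d ≤ E(d* d)` for `d ∈ ker E`; since `E` is faithful (it is implemented by `e`), `d* d ∈ A`, and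
by polarization `ker E · ker E ⊆ A`. Consequently `ι(d) = e ι(d) + ι(d) e` for `d ∈ ker E`, every
element of the corner `e C (1 - e)` is `e ι(d)` for a unique `d ∈ ker E`, and the inner products are
`_A⟨e ι(d), e ι(d')⟩ = E(d d'*)` and `⟨e ι(d), e ι(d')⟩_A = d* d'`. All axioms then reduce to
`ι(b) e ι(d) = ι(b d) (1 - e)` for `d ∈ ker E`, and fullness to `∑ yᵢ yᵢ* = 1`.
-/

noncomputable section

/-- A conditional expectation of a unital C*-algebra `B` onto a C*-subalgebra `A`. -/
structure CondExp (B : Type*) [NormedRing B] [StarRing B] [NormedAlgebra ℂ B] [StarModule ℂ B]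
    (A : StarSubalgebra ℂ B) where
  toFun : B →ₗ[ℂ] B
  mem_range : ∀ b, toFun b ∈ A
  fixes : ∀ a ∈ A, toFun a = a
  left_mod : ∀ a ∈ A, ∀ b, toFun (a * b) = a * toFun b
  right_mod : ∀ a ∈ A, ∀ b, toFun (b * a) = toFun b * a
  star_map : ∀ b, toFun (star b) = star (toFun b)
  pos : ∀ b, ∃ c, toFun (star b * b) = star c * c

/-- `x` is a quasi-basis for the conditional expectation `E` (with pairs `(x i, (x i)*)`). -/
def IsQuasiBasis {B : Type*} [NormedRing B] [StarRing B] [NormedAlgebra ℂ B] [StarModule ℂ B]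
    {A : StarSubalgebra ℂ B} (E : CondExp B A) {n : ℕ} (x : Fin n → B) : Prop :=
  (∀ b, ∑ i, x i * E.toFun (star (x i) * b) = b) ∧
  (∀ b, ∑ i, E.toFun (b * x i) * star (x i) = b)

/-- The C*-basic construction `C = C*⟨B, e_A⟩` of a conditional expectation `E : B → A`,
with Jones projection `e`. -/
structure BasicConstruction {B : Type*} [NormedRing B] [StarRing B] [NormedAlgebra ℂ B] [StarModule ℂ B]
    {A : StarSubalgebra ℂ B} (E : CondExp B A)
    (C : Type*) [NormedRing C] [StarRing C] [NormedAlgebra ℂ C] [StarModule ℂ C] where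
  ι : B →⋆ₐ[ℂ] C
  inj : Function.Injective ι
  e : C
  e_star : star e = e
  e_idem : e * e = e
  jones : ∀ b, e * ι b * e = ι (E.toFun b) * e
  dense : (Submodule.span ℂ {y : C | ∃ b c : B, y = ι b * e * ι c}).topologicalClosure = ⊤
  mul_e_inj : ∀ b : B, ι b * e = 0 → b = 0

theorem star_mul_mem_of_forall_star_mul_self_mem {B : Type*} [Ring B] [StarRing B] [Module ℂ B]
    [StarModule ℂ B] [IsScalarTower ℂ B B] [SMulCommClass ℂ B B]
    (K F : Submodule ℂ B) (hKF : ∀ d ∈ K, star d * d ∈ F) {u c : B} (hu : u ∈ K) (hc : c ∈ K) :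
    star u * c ∈ F := by
  have hsym : ∀ v ∈ K, star v * c + star c * v ∈ F := fun v hv => by
    convert F.sub_mem (F.sub_mem (hKF _ (K.add_mem hv hc)) (hKF v hv)) (hKF c hc) using 1
    simp only [star_add, add_mul, mul_add]
    abel
  have hpol : star u * c = (2⁻¹ : ℂ) • ((star u * c + star c * u)
      + Complex.I • (star (Complex.I • u) * c + star c * (Complex.I • u))) := by
    simp only [star_smul, Complex.star_def, Complex.conj_I, smul_mul_assoc, mul_smul_comm]
    linear_combination (norm := module)
      Complex.I_mul_I • ((2⁻¹ : ℂ) • (star u * c) - (2⁻¹ : ℂ) • (star c * u))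
  rw [hpol]
  exact F.smul_mem _ (F.add_mem (hsym u hu) (F.smul_mem _ (hsym _ (K.smul_mem _ hu))))

theorem sum_sum_star_mul_star_mul_mul {B ι : Type*} [Ring B] [StarRing B] (s : Finset ι)
    (c u : ι → B) (m : B) :
    ∑ k ∈ s, ∑ l ∈ s, star (c k) * (star (u k) * m * u l) * c l
      = star (∑ k ∈ s, u k * c k) * m * ∑ l ∈ s, u l * c l := by
  simp only [star_sum, star_mul, Finset.sum_mul, Finset.mul_sum, mul_assoc]
  exact Finset.sum_comm

theorem nonneg_of_forall_pos_add_smul_nonneg {B : Type*} [CStarAlgebra B] [PartialOrder B]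
    [StarOrderedRing B] {q : B} (p : B) (h : ∀ ε : ℝ, 0 < ε → 0 ≤ q + ε • p) : 0 ≤ q := by
  have hlim : Filter.Tendsto (fun ε : ℝ => q + ε • p) (nhdsWithin 0 (Set.Ioi 0)) (nhds q) :=
    ((by fun_prop : Continuous fun ε : ℝ => q + ε • p).tendsto' 0 q (by simp)).mono_left
      nhdsWithin_le_nhds
  exact CStarAlgebra.isClosed_nonneg.mem_of_tendsto hlim (eventually_nhdsWithin_of_forall h)

namespace CondExp

variable {B : Type*} [NormedRing B] [StarRing B] [NormedAlgebra ℂ B] [StarModule ℂ B]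
  {A : StarSubalgebra ℂ B} (E : CondExp B A)

theorem map_one : E.toFun 1 = 1 := E.fixes 1 (one_mem A)

theorem apply_apply (b : B) : E.toFun (E.toFun b) = E.toFun b := E.fixes _ (E.mem_range b)

theorem apply_sub_apply_self (b : B) : E.toFun (b - E.toFun b) = 0 := by
  rw [map_sub, E.apply_apply, sub_self]

theorem apply_star_eq_zero {b : B} (hb : E.toFun b = 0) : E.toFun (star b) = 0 := by
  rw [E.star_map, hb, star_zero]

theorem star_apply_star_mul (b c : B) : star (E.toFun (star b * c)) = E.toFun (star c * b) := by
  rw [← E.star_map, star_mul, star_star]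

theorem apply_star_mul_self_nonneg [PartialOrder B] [StarOrderedRing B] (b : B) :
    0 ≤ E.toFun (star b * b) := by
  obtain ⟨c, hc⟩ := E.pos b
  exact hc ▸ star_mul_self_nonneg c

theorem inv_mem (E : CondExp B A) {u : Bˣ} (hu : (u : B) ∈ A) : ((u⁻¹ : Bˣ) : B) ∈ A := by
  have h : E.toFun (u⁻¹ : Bˣ) * u = 1 := by
    rw [← E.right_mod _ hu, Units.inv_mul, E.map_one]
  exact Units.mul_eq_one_iff_eq_inv.mp h ▸ E.mem_range _

theorem apply_star_sub_mul_sub (b b' c : B) {t t' : B} (ht : t ∈ A) (ht' : t' ∈ A) :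
    E.toFun (star (b - b' * t) * (c - b' * t'))
      = E.toFun (star b * c) - star t * E.toFun (star b' * c) - E.toFun (star b * b') * t'
        + star t * E.toFun (star b' * b') * t' := by
  have hst : star t ∈ A := star_mem ht
  simp only [star_sub, star_mul, sub_mul, mul_sub, map_sub, mul_assoc]
  rw [← mul_assoc (star b) b' t', E.right_mod _ ht', E.left_mod _ hst,
    ← mul_assoc (star b') b' t', E.left_mod _ hst, E.right_mod _ ht']
  abel

variable {ι : Type*}

def gramSum (s : Finset ι) (b c : ι → B) : B :=
  ∑ k ∈ s, ∑ l ∈ s, star (c k) * E.toFun (star (b k) * b l) * c l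

theorem gramSum_insert [DecidableEq ι] {a : ι} {s : Finset ι} (ha : a ∉ s) (b c : ι → B) :
    E.gramSum (insert a s) b c
      = star (c a) * E.toFun (star (b a) * b a) * c a
        + star (c a) * ∑ l ∈ s, E.toFun (star (b a) * b l) * c l
        + star (∑ l ∈ s, E.toFun (star (b a) * b l) * c l) * c a + E.gramSum s b c := by
  simp only [gramSum, Finset.sum_insert ha, Finset.sum_add_distrib, star_sum, star_mul,
    E.star_apply_star_mul, Finset.mul_sum, Finset.sum_mul, mul_assoc]
  abel

theorem gramSum_sub_mul {h : B} (hA : h ∈ A) (hself : star h = h) (s : Finset ι) (b c : ι → B)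
    (a : ι) :
    E.gramSum s (fun k => b k - b a * (h * E.toFun (star (b a) * b k))) c
      = E.gramSum s b c - star (∑ l ∈ s, E.toFun (star (b a) * b l) * c l)
          * (h + h - h * E.toFun (star (b a) * b a) * h)
          * ∑ l ∈ s, E.toFun (star (b a) * b l) * c l := by
  have hmem : ∀ k, h * E.toFun (star (b a) * b k) ∈ A := fun k => mul_mem hA (E.mem_range _)
  have hstar : ∀ k, star (h * E.toFun (star (b a) * b k)) = E.toFun (star (b k) * b a) * h :=
    fun k => by rw [star_mul, hself, E.star_apply_star_mul]
  rw [← sum_sum_star_mul_star_mul_mul, gramSum, gramSum, ← Finset.sum_sub_distrib]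
  refine Finset.sum_congr rfl fun k _ => ?_
  rw [← Finset.sum_sub_distrib]
  refine Finset.sum_congr rfl fun l _ => ?_
  rw [E.apply_star_sub_mul_sub _ _ _ (hmem k) (hmem l), hstar, E.star_apply_star_mul]
  simp only [mul_sub, sub_mul, mul_add, add_mul, mul_assoc]
  abel

/-- Completing the square in the Gram–Schmidt step; `ε > 0` makes `E(bₐ* bₐ) + ε` invertible. -/
theorem gramSum_insert_add_smul [DecidableEq ι] {a : ι} {s : Finset ι} (ha : a ∉ s)
    (b c : ι → B) (ε : ℝ) {h : B} (hA : h ∈ A) (hself : star h = h)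
    (hαh : (E.toFun (star (b a) * b a) + ε • 1) * h = 1)
    (hhα : h * (E.toFun (star (b a) * b a) + ε • 1) = 1) :
    E.gramSum (insert a s) b c + ε • (star (c a) * c a)
      = E.gramSum s (fun k => b k - b a * (h * E.toFun (star (b a) * b k))) c
        + star (h * ∑ l ∈ s, E.toFun (star (b a) * b l) * c l + c a)
            * (E.toFun (star (b a) * b a) + ε • 1)
            * (h * ∑ l ∈ s, E.toFun (star (b a) * b l) * c l + c a)
        + ε • (star (h * ∑ l ∈ s, E.toFun (star (b a) * b l) * c l)
            * (h * ∑ l ∈ s, E.toFun (star (b a) * b l) * c l)) := by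
  rw [E.gramSum_insert ha, E.gramSum_sub_mul hA hself]
  set G := E.toFun (star (b a) * b a)
  set v := ∑ l ∈ s, E.toFun (star (b a) * b l) * c l
  have hGh : h * G * h = h - ε • (h * h) := by
    have hhG : h * G = 1 - ε • h := by
      rw [eq_sub_iff_add_eq, ← hhα, mul_add, mul_smul_comm, mul_one]
    rw [hhG, sub_mul, one_mul, smul_mul_assoc]
  have hsq : star (h * v + c a) * (G + ε • 1) * (h * v + c a)
      = star v * (h * v) + star v * c a + star (c a) * v + star (c a) * (G + ε • 1) * c a := by
    have hαh' : ∀ x, (G + ε • 1) * (h * x) = x := fun x => by rw [← mul_assoc, hαh, one_mul]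
    have hhα' : ∀ x, h * ((G + ε • 1) * x) = x := fun x => by rw [← mul_assoc, hhα, one_mul]
    generalize G + ε • 1 = α at hαh' hhα' ⊢
    simp only [star_add, star_mul, hself, add_mul, mul_add, mul_assoc, hαh', hhα']
    abel
  rw [hGh, hsq]
  simp only [star_mul, hself, mul_add, add_mul, mul_sub, sub_mul, smul_mul_assoc, mul_smul_comm,
    mul_one, mul_assoc]
  abel

theorem gramSum_univ_option [Fintype ι] (b c : Option ι → B) :
    E.gramSum Finset.univ b c
      = star (c none) * E.toFun (star (b none) * b none) * c none
        + star (c none) * ∑ l, E.toFun (star (b none) * b (some l)) * c (some l)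
        + star (∑ l, E.toFun (star (b none) * b (some l)) * c (some l)) * c none
        + E.gramSum Finset.univ (b ∘ some) (c ∘ some) := by
  simp only [gramSum, Fintype.sum_option, Finset.sum_add_distrib, star_sum, star_mul,
    E.star_apply_star_mul, Finset.mul_sum, Finset.sum_mul, mul_assoc, Function.comp_apply]
  abel

end CondExp

namespace IsQuasiBasis

variable {B : Type*} [NormedRing B] [StarRing B] [NormedAlgebra ℂ B] [StarModule ℂ B]
  {A : StarSubalgebra ℂ B} {E : CondExp B A} {n : ℕ} {x : Fin n → B}

theorem sum_mul_apply_star (hx : IsQuasiBasis E x) : ∑ i, x i * E.toFun (star (x i)) = 1 := by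
  simpa using hx.1 1

theorem sum_apply_mul_star (hx : IsQuasiBasis E x) : ∑ i, E.toFun (x i) * star (x i) = 1 := by
  simpa using hx.2 1

theorem sum_mul_star_apply_mul (hx : IsQuasiBasis E x) (b : B) :
    ∑ i, x i * star (E.toFun (b * x i)) = star b := by
  simpa [star_sum, star_mul] using congrArg star (hx.2 b)

theorem sum_sub_apply_mul_star_sub_apply (hx : IsQuasiBasis E x)
    (hidx : ∑ i, x i * star (x i) = (2 : B)) :
    ∑ i, (x i - E.toFun (x i)) * star (x i - E.toFun (x i)) = 1 := by
  have hAA : ∑ i, E.toFun (x i) * E.toFun (star (x i)) = 1 := by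
    simp_rw [← E.left_mod _ (E.mem_range _)]
    rw [← map_sum, hx.sum_apply_mul_star, E.map_one]
  simp only [star_sub, ← E.star_map, sub_mul, mul_sub, Finset.sum_sub_distrib]
  rw [hidx, hx.sum_mul_apply_star, hx.sum_apply_mul_star, hAA]
  norm_num

theorem sum_apply_star_mul_sub_mul_star (hx : IsQuasiBasis E x) {d : B} (hd : E.toFun d = 0) :
    ∑ l, E.toFun (star d * (d * x l - E.toFun (d * x l))) * star (x l) = star d * d := by
  have h : ∀ l, E.toFun (star d * (d * x l - E.toFun (d * x l))) = E.toFun (star d * d * x l) :=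
    fun l => by
      rw [mul_sub, map_sub, E.right_mod _ (E.mem_range _), E.apply_star_eq_zero hd, zero_mul,
        sub_zero, mul_assoc]
  simp only [h, hx.2]

theorem gramSum_sub_apply (hx : IsQuasiBasis E x) (hidx : ∑ i, x i * star (x i) = (2 : B))
    (d : B) :
    E.gramSum Finset.univ (fun k => d * x k - E.toFun (d * x k)) (fun k => star (x k))
      = star d * d := by
  have hGram : ∀ k l, E.toFun (star (d * x k - E.toFun (d * x k)) * (d * x l - E.toFun (d * x l)))
      = E.toFun (star (x k) * (star d * d * x l))
        - star (E.toFun (d * x k)) * E.toFun (d * x l) := by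
    intro k l
    rw [← one_mul (E.toFun (d * x k)), ← one_mul (E.toFun (d * x l)),
      E.apply_star_sub_mul_sub _ _ _ (E.mem_range _) (E.mem_range _)]
    simp only [mul_one, star_one, one_mul, E.map_one, star_mul, mul_assoc]
    rw [← E.star_map, star_mul]
    abel
  have hfirst : ∑ k, ∑ l, x k * E.toFun (star (x k) * (star d * d * x l)) * star (x l)
      = star d * d * 2 := by
    rw [Finset.sum_comm]
    simp_rw [← Finset.sum_mul, hx.1, mul_assoc, ← Finset.mul_sum, hidx]
  have hsecond : ∑ k, ∑ l, x k * (star (E.toFun (d * x k)) * E.toFun (d * x l)) * star (x l)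
      = star d * d := by
    calc _ = ∑ k, ∑ l, x k * star (E.toFun (d * x k)) * (E.toFun (d * x l) * star (x l)) := by
          simp only [mul_assoc]
      _ = star d * d := by rw [← Finset.sum_mul_sum, hx.sum_mul_star_apply_mul, hx.2]
  simp only [CondExp.gramSum, star_star, hGram]
  simp only [mul_sub, sub_mul, Finset.sum_sub_distrib]
  rw [hfirst, hsecond, mul_two, add_sub_cancel_right]

end IsQuasiBasis

namespace CondExp

variable {B : Type*} [CStarAlgebra B] {A : StarSubalgebra ℂ B} (E : CondExp B A)

theorem exists_inverse_apply_star_mul_self_add_smul_one (b : B) {ε : ℝ} (hε : 0 < ε) :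
    ∃ h ∈ A, star h = h ∧ (E.toFun (star b * b) + ε • 1) * h = 1
      ∧ h * (E.toFun (star b * b) + ε • 1) = 1 := by
  let _ := CStarAlgebra.spectralOrder B
  have := CStarAlgebra.spectralOrderedRing B
  set α := E.toFun (star b * b) + ε • 1
  have hα : IsUnit α := by
    refine CStarAlgebra.isUnit_of_le (algebraMap ℝ B ε) ?_ (isStrictlyPositive_algebraMap hε)
    rw [Algebra.algebraMap_eq_smul_one]
    exact le_add_of_nonneg_left (E.apply_star_mul_self_nonneg b)
  have hαA : α ∈ A := add_mem (E.mem_range _) (A.smul_mem (one_mem A) ε)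
  have hαself : star α = α := by
    simp only [α, star_add, ← E.star_map, star_mul, star_star, star_smul, star_one, star_trivial]
  lift α to Bˣ using hα with u hu
  refine ⟨(u⁻¹ : Bˣ), E.inv_mem hαA, ?_, u.mul_inv, u.inv_mul⟩
  set h : B := ((u⁻¹ : Bˣ) : B)
  calc star h = star h * (u * h) := by rw [u.mul_inv, mul_one]
    _ = star (u * h) * h := by rw [star_mul, hαself, mul_assoc]
    _ = h := by rw [u.mul_inv, star_one, one_mul]

/-- Complete positivity of `E`: split off `bₐ` by a Gram–Schmidt step and let `ε → 0`. -/
theorem gramSum_nonneg [PartialOrder B] [StarOrderedRing B] {ι : Type*} (s : Finset ι)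
    (b c : ι → B) : 0 ≤ E.gramSum s b c := by
  classical
  induction s using Finset.induction_on generalizing b with
  | empty => simp [gramSum]
  | insert a s ha ih =>
    refine nonneg_of_forall_pos_add_smul_nonneg (star (c a) * c a) fun ε hε => ?_
    obtain ⟨h, hA, hself, hαh, hhα⟩ :=
      E.exists_inverse_apply_star_mul_self_add_smul_one (b a) hε
    have hα : 0 ≤ E.toFun (star (b a) * b a) + ε • 1 :=
      add_nonneg (E.apply_star_mul_self_nonneg _) (smul_nonneg hε.le zero_le_one)
    rw [E.gramSum_insert_add_smul ha b c ε hA hself hαh hhα]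
    exact add_nonneg (add_nonneg (ih _) (star_left_conjugate_nonneg hα _))
      (smul_nonneg hε.le (star_mul_self_nonneg _))

/-- A Pimsner–Popa type inequality for index `2`, obtained from complete positivity applied to
the vector `(d, d x₁ - E(d x₁), …)` with coefficients `(-1, x₁*, …)`. -/
theorem star_mul_self_le_apply [PartialOrder B] [StarOrderedRing B] {n : ℕ} {x : Fin n → B}
    (hx : IsQuasiBasis E x) (hidx : ∑ i, x i * star (x i) = (2 : B)) {d : B}
    (hd : E.toFun d = 0) : star d * d ≤ E.toFun (star d * d) := by
  have h := E.gramSum_nonneg Finset.univ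
    (fun o : Option (Fin n) => o.elim d fun k => d * x k - E.toFun (d * x k))
    (fun o => o.elim (-1) fun k => star (x k))
  rw [gramSum_univ_option] at h
  simp only [Option.elim_none, Option.elim_some, Function.comp_def,
    hx.sum_apply_star_mul_sub_mul_star hd, hx.gramSum_sub_apply hidx] at h
  simpa [sub_nonneg, ← sub_eq_add_neg] using h

end CondExp

namespace BasicConstruction

variable {B C : Type*} [CStarAlgebra B] [CStarAlgebra C] {A : StarSubalgebra ℂ B}
  {E : CondExp B A} (bc : BasicConstruction E C) {n : ℕ} {x : Fin n → B}

theorem mem_of_isClosed (S : Submodule ℂ C) (hS : IsClosed (S : Set C))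
    (h : ∀ b c : B, bc.ι b * bc.e * bc.ι c ∈ S) (z : C) : z ∈ S := by
  have hspan : Submodule.span ℂ {y : C | ∃ b c : B, y = bc.ι b * bc.e * bc.ι c} ≤ S :=
    Submodule.span_le.2 (by rintro y ⟨b, c, rfl⟩; exact h b c)
  have := Submodule.topologicalClosure_minimal _ hspan hS
  rw [bc.dense] at this
  exact this Submodule.mem_top

theorem ι_mul_ι_mul (a b : B) (r : C) : bc.ι a * (bc.ι b * r) = bc.ι (a * b) * r := by
  rw [map_mul, mul_assoc]

theorem e_mul_ι_mul_e_mul (b : B) (r : C) :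
    bc.e * (bc.ι b * (bc.e * r)) = bc.ι (E.toFun b) * (bc.e * r) := by
  rw [← mul_assoc, ← mul_assoc, bc.jones, mul_assoc]

theorem ext_mul (u v : C)
    (h : ∀ b c : B, u * (bc.ι b * bc.e * bc.ι c) = v * (bc.ι b * bc.e * bc.ι c)) : u = v := by
  have hS : IsClosed ((LinearMap.mulLeft ℂ (u - v)).ker : Set C) :=
    isClosed_eq (continuous_const.mul continuous_id) continuous_const
  have h1 := bc.mem_of_isClosed _ hS (fun b c => by simp [sub_mul, h b c]) 1
  simpa [sub_eq_zero] using h1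

theorem e_mul_ι {a : B} (ha : a ∈ A) : bc.e * bc.ι a = bc.ι a * bc.e := by
  refine bc.ext_mul _ _ fun b c => ?_
  simp only [mul_assoc, ι_mul_ι_mul, e_mul_ι_mul_e_mul, E.left_mod a ha]

theorem eq_zero_of_e_mul_ι_eq_zero {b : B} (h : bc.e * bc.ι b = 0) : b = 0 := by
  have h' : bc.ι (star b) * bc.e = 0 := by
    rw [map_star, ← bc.e_star, ← star_mul, h, star_zero]
  simpa using bc.mul_e_inj _ h'

theorem sum_ι_mul_e_mul_ι_star (hx : IsQuasiBasis E x) :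
    ∑ i, bc.ι (x i) * bc.e * bc.ι (star (x i)) = 1 := by
  refine bc.ext_mul _ _ fun b c => ?_
  rw [Finset.sum_mul, one_mul]
  calc ∑ i, bc.ι (x i) * bc.e * bc.ι (star (x i)) * (bc.ι b * bc.e * bc.ι c)
      = ∑ i, bc.ι (x i * E.toFun (star (x i) * b)) * bc.e * bc.ι c :=
        Finset.sum_congr rfl fun i _ => by
          simp only [mul_assoc, ι_mul_ι_mul, e_mul_ι_mul_e_mul]
    _ = bc.ι b * bc.e * bc.ι c := by rw [← Finset.sum_mul, ← Finset.sum_mul, ← map_sum, hx.1]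

theorem condExp_eq_zero_of_nonneg [PartialOrder B] [StarOrderedRing B]
    (bc : BasicConstruction E C) {p : B} (hp : 0 ≤ p)
    (h0 : E.toFun p = 0) : p = 0 := by
  obtain ⟨s, rfl⟩ := CStarAlgebra.nonneg_iff_eq_star_mul_self.mp hp
  have h : star (bc.ι s * bc.e) * (bc.ι s * bc.e) = 0 := by
    rw [star_mul, bc.e_star, ← map_star, mul_assoc, bc.ι_mul_ι_mul, ← mul_assoc, bc.jones, h0,
      map_zero, zero_mul]
  rw [bc.mul_e_inj s (CStarRing.star_mul_self_eq_zero_iff _ |>.mp h), star_zero, zero_mul]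

/-- The grading `B = A ⊕ ker E`: faithfulness turns `star_mul_self_le_apply` into `d* d ∈ A`, and
polarization does the rest. -/
theorem condExp_mul_of_condExp_eq_zero (bc : BasicConstruction E C) (hx : IsQuasiBasis E x)
    (hidx : ∑ i, x i * star (x i) = (2 : B)) {b c : B} (hb : E.toFun b = 0)
    (hc : E.toFun c = 0) : E.toFun (b * c) = b * c := by
  let _ := CStarAlgebra.spectralOrder B
  have _ := CStarAlgebra.spectralOrderedRing B
  have hsq : ∀ d ∈ LinearMap.ker E.toFun, star d * d ∈ LinearMap.eqLocus E.toFun LinearMap.id :=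
    fun d hd => by
      have h := bc.condExp_eq_zero_of_nonneg
        (sub_nonneg.mpr (E.star_mul_self_le_apply hx hidx (LinearMap.mem_ker.mp hd)))
        (by rw [map_sub, E.apply_apply, sub_self])
      exact LinearMap.mem_eqLocus.mpr (sub_eq_zero.mp h)
  simpa using star_mul_mem_of_forall_star_mul_self_mem _ _ hsq
    (LinearMap.mem_ker.mpr (E.apply_star_eq_zero hb)) (LinearMap.mem_ker.mpr hc)

theorem star_mul_mem (bc : BasicConstruction E C) (hx : IsQuasiBasis E x)
    (hidx : ∑ i, x i * star (x i) = (2 : B)) {d d' : B} (hd : E.toFun d = 0)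
    (hd' : E.toFun d' = 0) : star d * d' ∈ A :=
  bc.condExp_mul_of_condExp_eq_zero hx hidx (E.apply_star_eq_zero hd) hd' ▸ E.mem_range _

theorem ι_eq_e_mul_add_mul_e (hx : IsQuasiBasis E x)
    (hidx : ∑ i, x i * star (x i) = (2 : B)) {d : B} (hd : E.toFun d = 0) :
    bc.ι d = bc.e * bc.ι d + bc.ι d * bc.e := by
  have key : ∀ w, E.toFun (d * w) + d * E.toFun w = d * w := fun w => by
    have h := bc.condExp_mul_of_condExp_eq_zero hx hidx hd (E.apply_sub_apply_self w)
    rw [mul_sub, map_sub, E.right_mod _ (E.mem_range w), hd, zero_mul, sub_zero] at h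
    rw [h, sub_add_cancel]
  symm
  refine bc.ext_mul _ _ fun b c => ?_
  simp only [add_mul, mul_assoc, ι_mul_ι_mul, e_mul_ι_mul_e_mul]
  rw [← add_mul, ← map_add, key]

theorem ι_mul_e_mul_ι (hx : IsQuasiBasis E x)
    (hidx : ∑ i, x i * star (x i) = (2 : B)) (b : B) {c : B} (hc : E.toFun c = 0) :
    bc.ι b * bc.e * bc.ι c = bc.ι (b * c) * (1 - bc.e) := by
  have h : bc.e * bc.ι c = bc.ι c - bc.ι c * bc.e := by
    rw [eq_sub_iff_add_eq, ← bc.ι_eq_e_mul_add_mul_e hx hidx hc]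
  rw [mul_assoc, h, mul_sub, mul_sub, mul_one, ← mul_assoc, ← map_mul]

theorem one_sub_e_mul_ι_mul_e (b : B) :
    (1 - bc.e) * bc.ι b * bc.e = bc.ι (b - E.toFun b) * bc.e := by
  rw [sub_mul, sub_mul, one_mul, bc.jones, map_sub, sub_mul]

theorem e_mul_ι_mul_one_sub_e (b : B) :
    bc.e * bc.ι b * (1 - bc.e) = bc.e * bc.ι (b - E.toFun b) := by
  rw [mul_sub, mul_one, bc.jones, ← bc.e_mul_ι (E.mem_range b), map_sub, mul_sub]

theorem one_sub_e_eq_sum (hx : IsQuasiBasis E x) :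
    1 - bc.e = ∑ i, bc.ι (x i - E.toFun (x i)) * bc.e * bc.ι (star (x i - E.toFun (x i))) := by
  have hq : (1 - bc.e) * (1 - bc.e) = 1 - bc.e := (IsIdempotentElem.one_sub bc.e_idem).eq
  have he : ∀ r, bc.e * (bc.e * r) = bc.e * r := fun r => by rw [← mul_assoc, bc.e_idem]
  have hterm : ∀ i, bc.ι (x i - E.toFun (x i)) * bc.e * bc.ι (star (x i - E.toFun (x i)))
      = (1 - bc.e) * (bc.ι (x i) * bc.e * bc.ι (star (x i))) * (1 - bc.e) := fun i => by
    rw [star_sub, ← E.star_map]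
    calc _ = bc.ι (x i - E.toFun (x i)) * bc.e
            * (bc.e * bc.ι (star (x i) - E.toFun (star (x i)))) := by simp only [mul_assoc, he]
      _ = (1 - bc.e) * bc.ι (x i) * bc.e * (bc.e * bc.ι (star (x i)) * (1 - bc.e)) := by
          rw [bc.one_sub_e_mul_ι_mul_e, bc.e_mul_ι_mul_one_sub_e]
      _ = _ := by simp only [mul_assoc, he]
  rw [Finset.sum_congr rfl fun i _ => hterm i, ← Finset.sum_mul, ← Finset.mul_sum,
    bc.sum_ι_mul_e_mul_ι_star hx, mul_one, hq]

theorem isClosed_subalgebra (bc : BasicConstruction E C) : IsClosed (A : Set B) := by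
  have hι : Continuous bc.ι := (NonUnitalStarAlgHom.isometry bc.ι bc.inj).continuous
  have hA : (A : Set B) = {b | bc.e * bc.ι b = bc.ι b * bc.e} := by
    ext b
    refine ⟨bc.e_mul_ι, fun hb => ?_⟩
    have h : bc.ι (E.toFun b - b) * bc.e = 0 := by
      rw [map_sub, sub_mul, ← bc.jones, hb, mul_assoc, bc.e_idem, sub_self]
    exact sub_eq_zero.mp (bc.mul_e_inj _ h) ▸ E.mem_range b
  rw [hA]
  exact isClosed_eq (continuous_const.mul hι) (hι.mul continuous_const)

/-- The map `ψ` of the paper, identifying `A` with the corner `e C e`. -/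
def psi : A →⋆ₙₐ[ℂ] C where
  toFun a := bc.ι a * bc.e
  map_smul' r a := by simp
  map_zero' := by simp
  map_add' a b := by simp [add_mul]
  map_mul' a b := by
    simp only [MulMemClass.coe_mul, map_mul, mul_assoc, ← bc.e_mul_ι b.2, ← mul_assoc bc.e,
      bc.e_idem]
  map_star' a := by
    change bc.ι (star (a : B)) * bc.e = star (bc.ι a * bc.e)
    rw [star_mul, bc.e_star, ← map_star, bc.e_mul_ι (star_mem a.2)]

theorem psi_apply (a : A) : bc.psi a = bc.ι a * bc.e := rfl

theorem psi_injective : Function.Injective bc.psi := fun a b h => by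
  have h' : bc.ι ((a : B) - b) * bc.e = 0 := by rw [map_sub, sub_mul, sub_eq_zero]; exact h
  exact Subtype.ext (sub_eq_zero.mp (bc.mul_e_inj _ h'))

/-- `ψ` is isometric, so its range is closed, and it contains the compressions
`e (ι b e ι c) e = ψ(E b E c)` of the generators. -/
theorem exists_e_mul_mul_e_eq (z : C) : ∃ a ∈ A, bc.e * z * bc.e = bc.ι a * bc.e := by
  have : IsClosed (A : Set B) := bc.isClosed_subalgebra
  let S := LinearMap.range (bc.psi : A →ₗ[ℂ] C)
  have hS : IsClosed (S : Set C) :=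
    (NonUnitalStarAlgHom.isometry bc.psi bc.psi_injective).isClosedEmbedding.isClosed_range
  let L := LinearMap.mulLeftRight ℂ (bc.e, bc.e)
  have hL : ⇑L = fun z => bc.e * z * bc.e := funext fun z => LinearMap.mulLeftRight_apply ..
  have hmem : ∀ z, L z ∈ S := by
    refine bc.mem_of_isClosed (S.comap L) (hS.preimage (hL ▸ by fun_prop)) fun b c => ?_
    refine ⟨⟨E.toFun b * E.toFun c, mul_mem (E.mem_range b) (E.mem_range c)⟩, ?_⟩
    simp only [LinearMap.coe_coe, psi_apply, hL, map_mul, mul_assoc, e_mul_ι_mul_e_mul]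
    rw [← mul_assoc bc.e, bc.jones]
  obtain ⟨a, ha⟩ := hmem z
  exact ⟨a, a.2, ha.symm⟩

/-- Expand `y = y (1 - e)` along `one_sub_e_eq_sum` and apply `exists_e_mul_mul_e_eq` termwise. -/
theorem exists_eq_e_mul_ι (hx : IsQuasiBasis E x) {y : C} (hy : bc.e * y * (1 - bc.e) = y) :
    ∃ d, E.toFun d = 0 ∧ y = bc.e * bc.ι d := by
  have hq : (1 - bc.e) * (1 - bc.e) = 1 - bc.e := (IsIdempotentElem.one_sub bc.e_idem).eq
  have hyq : y * (1 - bc.e) = y := by rw [← hy, mul_assoc, hq]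
  have hey : bc.e * y = y := by rw [← hy, ← mul_assoc, ← mul_assoc, bc.e_idem]
  have hye : y * bc.e = 0 := by
    rw [← hyq, mul_assoc, sub_mul, one_mul, bc.e_idem, sub_self, mul_zero]
  choose a ha hae using fun i => bc.exists_e_mul_mul_e_eq (y * bc.ι (x i - E.toFun (x i)))
  set g := ∑ i, a i * star (x i - E.toFun (x i))
  have hg : y = bc.e * bc.ι g := by
    calc y = y * (1 - bc.e) := hyq.symm
      _ = ∑ i, bc.e * y * bc.ι (x i - E.toFun (x i)) * bc.e
            * bc.ι (star (x i - E.toFun (x i))) := by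
          rw [bc.one_sub_e_eq_sum hx, Finset.mul_sum, hey]
          simp only [mul_assoc]
      _ = bc.e * bc.ι g := by
          simp only [hae, ← bc.e_mul_ι (ha _), g, map_sum, Finset.mul_sum, map_mul, mul_assoc]
  refine ⟨g - E.toFun g, E.apply_sub_apply_self g, ?_⟩
  rw [map_sub, mul_sub, bc.e_mul_ι (E.mem_range g), ← bc.jones, ← hg, hye, sub_zero]

open Classical in
/-- Inverts `d ↦ e ι(d)` from `ker E` onto the corner `e C (1 - e)`; junk value `0` off it. -/
def cornerSymbol (y : C) : B :=
  if h : ∃ d, E.toFun d = 0 ∧ y = bc.e * bc.ι d then h.choose else 0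

theorem cornerSymbol_spec (hx : IsQuasiBasis E x) {y : C} (hy : bc.e * y * (1 - bc.e) = y) :
    E.toFun (bc.cornerSymbol y) = 0 ∧ y = bc.e * bc.ι (bc.cornerSymbol y) := by
  have h := bc.exists_eq_e_mul_ι hx hy
  rw [cornerSymbol, dif_pos h]
  exact h.choose_spec

theorem cornerSymbol_e_mul_ι {d : B} (hd : E.toFun d = 0) :
    bc.cornerSymbol (bc.e * bc.ι d) = d := by
  have h : ∃ d', E.toFun d' = 0 ∧ bc.e * bc.ι d = bc.e * bc.ι d' := ⟨d, hd, rfl⟩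
  rw [cornerSymbol, dif_pos h]
  refine (sub_eq_zero.mp (bc.eq_zero_of_e_mul_ι_eq_zero ?_)).symm
  rw [map_sub, mul_sub, ← h.choose_spec.2, sub_self]

theorem e_mul_ι_mem_corner {d : B} (hd : E.toFun d = 0) :
    bc.e * (bc.e * bc.ι d) * (1 - bc.e) = bc.e * bc.ι d := by
  rw [← mul_assoc, bc.e_idem, bc.e_mul_ι_mul_one_sub_e, hd, sub_zero]

theorem ι_mul_mem_corner {a : B} (ha : a ∈ A) {y : C} (hy : bc.e * y * (1 - bc.e) = y) :
    bc.e * (bc.ι a * y) * (1 - bc.e) = bc.ι a * y := by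
  rw [← mul_assoc, bc.e_mul_ι ha, mul_assoc, mul_assoc, ← mul_assoc bc.e, hy]

theorem mul_ι_mem_corner {a : B} (ha : a ∈ A) {y : C} (hy : bc.e * y * (1 - bc.e) = y) :
    bc.e * (y * bc.ι a) * (1 - bc.e) = y * bc.ι a := by
  have h : bc.ι a * (1 - bc.e) = (1 - bc.e) * bc.ι a := by
    rw [mul_sub, sub_mul, mul_one, one_mul, bc.e_mul_ι ha]
  rw [mul_assoc, mul_assoc, h, ← mul_assoc, ← mul_assoc, hy]

theorem ι_condExp_mul_star_mul_e {y z : C} {d d' : B} (hy : y = bc.e * bc.ι d)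
    (hz : z = bc.e * bc.ι d') : bc.ι (E.toFun (d * star d')) * bc.e = y * star z := by
  rw [hy, hz, ← bc.jones, star_mul, bc.e_star, ← map_star, map_mul]
  simp only [mul_assoc]

theorem ι_star_mul_mul_one_sub_e (hx : IsQuasiBasis E x)
    (hidx : ∑ i, x i * star (x i) = (2 : B))
    {y z : C} {d d' : B} (hy : y = bc.e * bc.ι d) (hz : z = bc.e * bc.ι d')
    (hd' : E.toFun d' = 0) : bc.ι (star d * d') * (1 - bc.e) = star y * z := by
  have he : ∀ r, bc.e * (bc.e * r) = bc.e * r := fun r => by rw [← mul_assoc, bc.e_idem]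
  rw [hy, hz, ← bc.ι_mul_e_mul_ι hx hidx _ hd', star_mul, bc.e_star, ← map_star]
  simp only [mul_assoc, he]

theorem ι_condExp_mul_star_mul (hx : IsQuasiBasis E x)
    (hidx : ∑ i, x i * star (x i) = (2 : B))
    {y w : C} {d d' d'' : B} (hy : y = bc.e * bc.ι d) (hw : w = bc.e * bc.ι d'')
    (hd : E.toFun d = 0) (hd' : E.toFun d' = 0) :
    bc.ι (E.toFun (d * star d')) * w = y * bc.ι (star d' * d'') := by
  have hdd' : E.toFun (d * star d') = d * star d' :=
    bc.condExp_mul_of_condExp_eq_zero hx hidx hd (E.apply_star_eq_zero hd')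
  rw [hy, hw, hdd', ← mul_assoc, ← bc.e_mul_ι (hdd' ▸ E.mem_range _), mul_assoc, ← map_mul,
    mul_assoc, mul_assoc, ← map_mul]

theorem topologicalClosure_span_eq (bc : BasicConstruction E C) {s : Set B} (hsA : s ⊆ A)
    (hAs : Subalgebra.toSubmodule A.toSubalgebra ≤ Submodule.span ℂ s) :
    (Submodule.span ℂ s).topologicalClosure = Subalgebra.toSubmodule A.toSubalgebra := by
  rw [le_antisymm (Submodule.span_le.2 hsA) hAs]
  exact bc.isClosed_subalgebra.submodule_topologicalClosure_eq

theorem topologicalClosure_span_condExp_cornerSymbol_mul_star (hx : IsQuasiBasis E x)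
    (hidx : ∑ i, x i * star (x i) = (2 : B)) :
    (Submodule.span ℂ {a : B | ∃ y z, bc.e * y * (1 - bc.e) = y ∧ bc.e * z * (1 - bc.e) = z ∧
        a = E.toFun (bc.cornerSymbol y * star (bc.cornerSymbol z))}).topologicalClosure
      = Subalgebra.toSubmodule A.toSubalgebra := by
  refine bc.topologicalClosure_span_eq ?_ fun a ha => ?_
  · rintro a ⟨y, z, -, -, rfl⟩
    exact E.mem_range _
  have hy : ∀ i, E.toFun (x i - E.toFun (x i)) = 0 := fun i => E.apply_sub_apply_self _
  have hay : ∀ i, E.toFun (a * (x i - E.toFun (x i))) = 0 := fun i => by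
    rw [E.left_mod a ha, hy, mul_zero]
  have hsum : a = ∑ i, E.toFun (bc.cornerSymbol (bc.e * bc.ι (a * (x i - E.toFun (x i))))
      * star (bc.cornerSymbol (bc.e * bc.ι (x i - E.toFun (x i))))) := by
    simp only [bc.cornerSymbol_e_mul_ι (hay _), bc.cornerSymbol_e_mul_ι (hy _), mul_assoc,
      ← map_sum, ← Finset.mul_sum, hx.sum_sub_apply_mul_star_sub_apply hidx, mul_one, E.fixes a ha]
  rw [hsum]
  exact Submodule.sum_mem _ fun i _ => Submodule.subset_span
    ⟨_, _, bc.e_mul_ι_mem_corner (hay i), bc.e_mul_ι_mem_corner (hy i), rfl⟩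

theorem topologicalClosure_span_star_cornerSymbol_mul (hx : IsQuasiBasis E x)
    (hidx : ∑ i, x i * star (x i) = (2 : B)) :
    (Submodule.span ℂ {a : B | ∃ y z, bc.e * y * (1 - bc.e) = y ∧ bc.e * z * (1 - bc.e) = z ∧
        a = star (bc.cornerSymbol y) * bc.cornerSymbol z}).topologicalClosure
      = Subalgebra.toSubmodule A.toSubalgebra := by
  refine bc.topologicalClosure_span_eq ?_ fun a ha => ?_
  · rintro a ⟨y, z, hy, hz, rfl⟩
    exact bc.star_mul_mem hx hidx (bc.cornerSymbol_spec hx hy).1 (bc.cornerSymbol_spec hx hz).1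
  have hy : ∀ i, E.toFun (star (x i - E.toFun (x i))) = 0 := fun i =>
    E.apply_star_eq_zero (E.apply_sub_apply_self _)
  have hya : ∀ i, E.toFun (star (x i - E.toFun (x i)) * a) = 0 := fun i => by
    rw [E.right_mod a ha, hy, zero_mul]
  have hsum : a = ∑ i, star (bc.cornerSymbol (bc.e * bc.ι (star (x i - E.toFun (x i)))))
      * bc.cornerSymbol (bc.e * bc.ι (star (x i - E.toFun (x i)) * a)) := by
    simp only [bc.cornerSymbol_e_mul_ι (hy _), bc.cornerSymbol_e_mul_ι (hya _), star_star,
      ← mul_assoc, ← Finset.sum_mul, hx.sum_sub_apply_mul_star_sub_apply hidx, one_mul]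
  rw [hsum]
  exact Submodule.sum_mem _ fun i _ => Submodule.subset_span
    ⟨_, _, bc.e_mul_ι_mem_corner (hy i), bc.e_mul_ι_mem_corner (hya i), rfl⟩

end BasicConstruction

theorem corner_is_equivalence_bimodule_general
    {B C : Type*} [NormedRing B] [StarRing B] [CStarRing B] [NormedAlgebra ℂ B]
    [StarModule ℂ B] [CompleteSpace B]
    [NormedRing C] [StarRing C] [CStarRing C] [NormedAlgebra ℂ C]
    [StarModule ℂ C] [CompleteSpace C]
    {A : StarSubalgebra ℂ B} (E : CondExp B A)
    {n : ℕ} (x : Fin n → B) (hx : IsQuasiBasis E x)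
    (hidx : ∑ i, x i * star (x i) = (2 : B))
    (bc : BasicConstruction E C)
    -- Cn x means x lies in the corner e_A C (1−e_A)
    (Cn : C → Prop) (hCn : ∀ y, Cn y ↔ bc.e * y * (1 - bc.e) = y) :
    -- the corner is an A-A-subbimodule of C
    (∀ a ∈ A, ∀ y, Cn y → Cn (bc.ι a * y) ∧ Cn (y * bc.ι a)) ∧
    -- and it carries A-valued inner products making it an equivalence bimodule:
    ∃ lin rin : C → C → B,
      (∀ y z, Cn y → Cn z → lin y z ∈ A ∧ bc.ι (lin y z) * bc.e = y * star z) ∧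
      (∀ y z, Cn y → Cn z → rin y z ∈ A ∧ bc.ι (rin y z) * (1 - bc.e) = star y * z) ∧
      (∀ y z, Cn y → Cn z → star (lin y z) = lin z y) ∧
      (∀ y z, Cn y → Cn z → star (rin y z) = rin z y) ∧
      (∀ y, Cn y → ∃ c : B, lin y y = star c * c) ∧
      (∀ y, Cn y → ∃ c : B, rin y y = star c * c) ∧
      -- imprimitivity: _A⟨x,y⟩·z = x·⟨y,z⟩_A
      (∀ y z w, Cn y → Cn z → Cn w →
        bc.ι (lin y z) * w = y * bc.ι (rin z w)) ∧
      -- fullness of both inner products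
      ((Submodule.span ℂ {a : B | ∃ y z, Cn y ∧ Cn z ∧ a = lin y z}).topologicalClosure
          = Subalgebra.toSubmodule A.toSubalgebra) ∧
      ((Submodule.span ℂ {a : B | ∃ y z, Cn y ∧ Cn z ∧ a = rin y z}).topologicalClosure
          = Subalgebra.toSubmodule A.toSubalgebra) := by
  let _ : CStarAlgebra B := { ‹NormedRing B›, ‹StarRing B›, ‹CStarRing B›, ‹NormedAlgebra ℂ B›,
    ‹StarModule ℂ B›, ‹CompleteSpace B› with }
  let _ : CStarAlgebra C := { ‹NormedRing C›, ‹StarRing C›, ‹CStarRing C›, ‹NormedAlgebra ℂ C›,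
    ‹StarModule ℂ C›, ‹CompleteSpace C› with }
  obtain rfl : Cn = fun y => bc.e * y * (1 - bc.e) = y := funext fun y => propext (hCn y)
  have hσ {y : C} (hy : bc.e * y * (1 - bc.e) = y) := bc.cornerSymbol_spec hx hy
  refine ⟨fun a ha y hy => ⟨bc.ι_mul_mem_corner ha hy, bc.mul_ι_mem_corner ha hy⟩,
    fun y z => E.toFun (bc.cornerSymbol y * star (bc.cornerSymbol z)),
    fun y z => star (bc.cornerSymbol y) * bc.cornerSymbol z,
    fun y z hy hz => ⟨E.mem_range _, bc.ι_condExp_mul_star_mul_e (hσ hy).2 (hσ hz).2⟩,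
    fun y z hy hz => ⟨bc.star_mul_mem hx hidx (hσ hy).1 (hσ hz).1,
      bc.ι_star_mul_mul_one_sub_e hx hidx (hσ hy).2 (hσ hz).2 (hσ hz).1⟩,
    fun y z _ _ => by rw [← E.star_map, star_mul, star_star],
    fun y z _ _ => by rw [star_mul, star_star],
    fun y _ => by simpa using E.pos (star (bc.cornerSymbol y)),
    fun y _ => ⟨_, rfl⟩,
    fun y z w hy hz hw =>
      bc.ι_condExp_mul_star_mul hx hidx (hσ hy).2 (hσ hw).2 (hσ hy).1 (hσ hz).1,
    bc.topologicalClosure_span_condExp_cornerSymbol_mul_star hx hidx,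
    bc.topologicalClosure_span_star_cornerSymbol_mul hx hidx⟩

/-- for Index E = 2, the corner `X_B = e_A C*⟨B,e_A⟩(1−e_A)` with the actions
`a·x·b = axb` and inner products `_A⟨x,y⟩ = ψ⁻¹(xy*)`, `⟨x,y⟩_A = φ⁻¹(x*y)`
(`ψ(a) = a e_A`, `φ(a) = a(1−e_A)`) is an A-A-equivalence bimodule. -/
theorem corner_is_equivalence_bimodule
    {B C : Type*} [NormedRing B] [StarRing B] [CStarRing B] [NormedAlgebra ℂ B]
    [StarModule ℂ B] [CompleteSpace B]
    [NormedRing C] [StarRing C] [CStarRing C] [NormedAlgebra ℂ C]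
    [StarModule ℂ C] [CompleteSpace C]
    {A : StarSubalgebra ℂ B} (E : CondExp B A)
    {n : ℕ} (x : Fin n → B) (hx : IsQuasiBasis E x)
    (hidx : ∑ i, x i * star (x i) = (2 : B))
    (bc : BasicConstruction E C)
    (Et : C →ₗ[ℂ] B)
    (hEt : ∀ b c : B, Et (bc.ι b * bc.e * bc.ι c) = ((2 : ℂ))⁻¹ • (b * c))
    -- Cn x means x lies in the corner e_A C (1−e_A)
    (Cn : C → Prop) (hCn : ∀ y, Cn y ↔ bc.e * y * (1 - bc.e) = y) :
    -- the corner is an A-A-subbimodule of C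
    (∀ a ∈ A, ∀ y, Cn y → Cn (bc.ι a * y) ∧ Cn (y * bc.ι a)) ∧
    -- and it carries A-valued inner products making it an equivalence bimodule:
    ∃ lin rin : C → C → B,
      (∀ y z, Cn y → Cn z → lin y z ∈ A ∧ bc.ι (lin y z) * bc.e = y * star z) ∧
      (∀ y z, Cn y → Cn z → rin y z ∈ A ∧ bc.ι (rin y z) * (1 - bc.e) = star y * z) ∧
      (∀ y z, Cn y → Cn z → star (lin y z) = lin z y) ∧
      (∀ y z, Cn y → Cn z → star (rin y z) = rin z y) ∧
      (∀ y, Cn y → ∃ c : B, lin y y = star c * c) ∧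
      (∀ y, Cn y → ∃ c : B, rin y y = star c * c) ∧
      -- imprimitivity: _A⟨x,y⟩·z = x·⟨y,z⟩_A
      (∀ y z w, Cn y → Cn z → Cn w →
        bc.ι (lin y z) * w = y * bc.ι (rin z w)) ∧
      -- fullness of both inner products
      ((Submodule.span ℂ {a : B | ∃ y z, Cn y ∧ Cn z ∧ a = lin y z}).topologicalClosure
          = Subalgebra.toSubmodule A.toSubalgebra) ∧
      ((Submodule.span ℂ {a : B | ∃ y z, Cn y ∧ Cn z ∧ a = rin y z}).topologicalClosure
          = Subalgebra.toSubmodule A.toSubalgebra) :=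
  corner_is_equivalence_bimodule_general E x hx hidx bc Cn hCn

end
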